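/- The asymptotic normalized mutual attraction distances satisfy: lim_{n→∞} dist(MA^{2n}, MD^{2n})/(4(n−1)n²) = 1, and for each pair {X,Y} among {ID, MA, MD, CH} other than {MA, MD}, lim_{n→∞} dist(X^{2n}, Y^{2n})/(4(n−1)n²) = 2/3, given the exact formulas dist(ID,MA)=dist(MA,CH)=(8/3)n³−4n²+(4/3)n, dist(ID,MD)=dist(MD,CH)=(8/3)n³−2n²−(2/3)n, dist(MA,MD)=4(n−1)n², and dist(ID,CH)=(8/3)n³+O(n²). -/

import Mathlib

/-- The mutual attraction distance between two `R × C` matrices over `ℕ`: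
the minimum over bijections of the row sets of the summed ℓ1-distances between
matched rows. -/
noncomputable def matDist {R C : ℕ} (M M' : Fin R → Fin C → ℕ) : ℕ :=
  sInf { d | ∃ σ : Fin R ≃ Fin R,
    d = ∑ i : Fin R, ∑ j : Fin C, Nat.dist (M i j) (M' (σ i) j) }

/-- The mutual agreement matrix `MA^{2n}`: all rows equal `(1, 2, …, 2n-1)`. -/
def MAmat (n : ℕ) : Fin (2 * n) → Fin (2 * n - 1) → ℕ := fun _ j => j.1 + 1

/-- The mutual disagreement matrix `MD^{2n}`: all rows equal
`(2n-1, 2n-2, …, 1)`. -/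
def MDmat (n : ℕ) : Fin (2 * n) → Fin (2 * n - 1) → ℕ := fun _ j => 2 * n - (j.1 + 1)

/-- The identity matrix `ID^{2n}`: entry `(i,j)` (1-indexed) is `i` if `j ≥ i`
and `i - 1` if `j < i`. -/
def IDmat (n : ℕ) : Fin (2 * n) → Fin (2 * n - 1) → ℕ := fun i j =>
  if i.1 ≤ j.1 then i.1 + 1 else i.1

/-- The chaos matrix `CH^{2n}`: the first row is `(1, …, 2n-1)` and (with
1-indexed rows `i ≥ 2` and columns `j`) entry `(i,j)` is the representative in
`[1, 2n-1]` of `i + nj − n − 1 (mod 2n−1)`. -/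
def CHmat (n : ℕ) : Fin (2 * n) → Fin (2 * n - 1) → ℕ := fun i j =>
  if i.1 = 0 then j.1 + 1
  else ((i.1 + 1) + n * (j.1 + 1) - n - 2) % (2 * n - 1) + 1

/-!
`IDmat n` and `CHmat n` have the same columns up to reordering: column `j` consists of
`1, …, 2n-1` and one more copy of `j+1` (for `CHmat` because `i ↦ i + c` permutes the residues
mod `2n-1`). As `MAmat n` and `MDmat n` have identical rows, their distance to any matrix does not
depend on the matching and only sees these column multisets; with
`T(m) = ∑_{j,k<m} |j-k| = (m³-m)/3` all distances involving `MA` or `MD` are exact cubics in `n`.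

For `ID` versus `CH`: every row of `CHmat n` is also a permutation of `1, …, 2n-1`, because `n`
is invertible mod `2n-1`, so the matrix with constant rows `i` has the same distance to `CHmat n`
under every matching. `IDmat n` differs from that matrix by at most one in each entry, which
moves the distance by `O(n²)`. Dividing by `D(2n) = 4(n-1)n² ~ 4n³` gives the limits.
-/

open Finset Filter Topology Asymptotics

lemma two_mul_sum_range_dist {j m : ℕ} (h : j ≤ m) :
    2 * ∑ k ∈ range m, Nat.dist k j = j * (j + 1) + (m - j) * (m - j - 1) := by
  induction m, h using Nat.le_induction with
  | base =>
    have hrefl : ∑ k ∈ range j, Nat.dist k j = ∑ k ∈ range (j + 1), k := by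
      rw [sum_range_succ', ← sum_range_reflect]
      refine (sum_congr rfl fun k hk => ?_).trans (add_zero _).symm
      simp only [mem_range] at hk
      simp only [Nat.dist]; omega
    rw [hrefl, mul_comm, sum_range_id_mul_two]
    simp [mul_comm]
  | succ m hjm ih =>
    obtain ⟨d, rfl⟩ := Nat.exists_eq_add_of_le hjm
    have hd : Nat.dist (j + d) j = d := by simp only [Nat.dist]; omega
    rw [sum_range_succ, mul_add, ih, hd, show j + d + 1 - j = d + 1 by omega,
      show j + d - j = d by omega, Nat.add_sub_cancel]
    cases d with
    | zero => rfl
    | succ d => simp only [Nat.add_sub_cancel]; ring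

def rangeDistSum (m : ℕ) : ℕ := ∑ j ∈ range m, ∑ k ∈ range m, Nat.dist j k

lemma rangeDistSum_succ (m : ℕ) : rangeDistSum (m + 1) = rangeDistSum m + m * (m + 1) := by
  have hcol := two_mul_sum_range_dist (le_refl m)
  simp only [Nat.sub_self, zero_mul, add_zero] at hcol
  have hrow : ∑ k ∈ range m, Nat.dist m k = ∑ k ∈ range m, Nat.dist k m :=
    sum_congr rfl fun k _ => Nat.dist_comm m k
  simp only [rangeDistSum, sum_range_succ, sum_add_distrib, Nat.dist_self, add_zero, hrow]
  omega

lemma three_mul_rangeDistSum_add (m : ℕ) : 3 * rangeDistSum m + m = m ^ 3 := by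
  induction m with
  | zero => simp [rangeDistSum]
  | succ m ih => rw [rangeDistSum_succ]; linear_combination ih

section MatchCost

variable {R C : ℕ}

def matchCost (M M' : Fin R → Fin C → ℕ) (σ : Fin R ≃ Fin R) : ℕ :=
  ∑ i, ∑ j, Nat.dist (M i j) (M' (σ i) j)

lemma matDist_le_matchCost (M M' : Fin R → Fin C → ℕ) (σ : Fin R ≃ Fin R) :
    matDist M M' ≤ matchCost M M' σ :=
  Nat.sInf_le ⟨σ, rfl⟩

lemma exists_matchCost_eq_matDist (M M' : Fin R → Fin C → ℕ) :
    ∃ σ, matchCost M M' σ = matDist M M' := by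
  obtain ⟨σ, hσ⟩ := Nat.sInf_mem (⟨_, Equiv.refl _, rfl⟩ :
    { d | ∃ σ : Fin R ≃ Fin R, d = matchCost M M' σ }.Nonempty)
  exact ⟨σ, hσ.symm⟩

lemma matDist_eq_of_forall_matchCost_eq {M M' : Fin R → Fin C → ℕ} {d : ℕ}
    (h : ∀ σ, matchCost M M' σ = d) : matDist M M' = d := by
  obtain ⟨σ, hσ⟩ := exists_matchCost_eq_matDist M M'
  rw [← hσ, h]

lemma matDist_const_rows (M : Fin R → Fin C → ℕ) (r : Fin C → ℕ) :
    matDist M (fun _ => r) = ∑ i, ∑ j, Nat.dist (M i j) (r j) :=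
  matDist_eq_of_forall_matchCost_eq fun _ => rfl

lemma matDist_comm (M M' : Fin R → Fin C → ℕ) : matDist M M' = matDist M' M := by
  suffices key : ∀ M M' : Fin R → Fin C → ℕ, matDist M M' ≤ matDist M' M from
    le_antisymm (key M M') (key M' M)
  intro M M'
  obtain ⟨σ, hσ⟩ := exists_matchCost_eq_matDist M' M
  calc matDist M M' ≤ matchCost M M' σ.symm := matDist_le_matchCost M M' σ.symm
    _ = matchCost M' M σ := by
      rw [matchCost, ← σ.sum_comp]
      simp only [Equiv.symm_apply_apply, Nat.dist_comm]
      rfl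
    _ = matDist M' M := hσ

lemma matDist_le_sum_dist_add (M N M' : Fin R → Fin C → ℕ) :
    matDist M M' ≤ (∑ i, ∑ j, Nat.dist (M i j) (N i j)) + matDist N M' := by
  obtain ⟨σ, hσ⟩ := exists_matchCost_eq_matDist N M'
  calc matDist M M' ≤ matchCost M M' σ := matDist_le_matchCost M M' σ
    _ ≤ ∑ i, ∑ j, (Nat.dist (M i j) (N i j) + Nat.dist (N i j) (M' (σ i) j)) :=
      sum_le_sum fun i _ => sum_le_sum fun j _ => Nat.dist.triangle_inequality _ _ _
    _ = (∑ i, ∑ j, Nat.dist (M i j) (N i j)) + matDist N M' := by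
      simp only [sum_add_distrib, ← hσ, matchCost]

end MatchCost

lemma sum_range_mod_affine {M : Type*} [AddCommMonoid M] {a m : ℕ} (ha : a.Coprime m)
    (c : ℕ) (f : ℕ → M) : ∑ t ∈ range m, f ((c + a * t) % m) = ∑ k ∈ range m, f k := by
  rcases Nat.eq_zero_or_pos m with rfl | hm
  · simp
  let e : Fin m → Fin m := fun t => ⟨(c + a * t) % m, Nat.mod_lt _ hm⟩
  have he : e.Injective := fun s t hst => by
    have hmod : s.1 ≡ t.1 [MOD m] :=
      Nat.ModEq.cancel_left_of_coprime (Nat.coprime_comm.mp ha)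
        (Nat.ModEq.add_left_cancel' c (Fin.mk.inj_iff.mp hst))
    exact Fin.ext (by rwa [Nat.ModEq, Nat.mod_eq_of_lt s.2, Nat.mod_eq_of_lt t.2] at hmod)
  rw [← Fin.sum_univ_eq_sum_range, ← Fin.sum_univ_eq_sum_range]
  exact (Finite.injective_iff_bijective.mp he).sum_comp (fun k => f k)

lemma coprime_two_mul_sub_one {n : ℕ} (hn : 1 ≤ n) : n.Coprime (2 * n - 1) := by
  rw [show 2 * n - 1 = n - 1 + n by omega, Nat.coprime_add_self_right,
    Nat.coprime_self_sub_right hn]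
  exact Nat.coprime_one_right n

lemma CHmat_of_ne_zero {n : ℕ} {i : Fin (2 * n)} (hi : i.1 ≠ 0) (j : Fin (2 * n - 1)) :
    CHmat n i j = (i.1 - 1 + n * j.1) % (2 * n - 1) + 1 := by
  rw [CHmat, if_neg hi, Nat.mul_succ]
  congr 2
  omega

lemma sum_CHmat_row {M : Type*} [AddCommMonoid M] {n : ℕ} (i : Fin (2 * n)) (g : ℕ → M) :
    ∑ j, g (CHmat n i j) = ∑ k ∈ range (2 * n - 1), g (k + 1) := by
  by_cases hi : i.1 = 0
  · simp only [CHmat, hi, if_true]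
    exact Fin.sum_univ_eq_sum_range (fun k => g (k + 1)) _
  · simp only [CHmat_of_ne_zero hi]
    rw [Fin.sum_univ_eq_sum_range (fun k => g ((i.1 - 1 + n * k) % (2 * n - 1) + 1))]
    exact sum_range_mod_affine (coprime_two_mul_sub_one (by omega)) _ (fun k => g (k + 1))

/-- Every column `j` has the multiset of entries `{1, …, 2n-1} + {j+1}`, as `IDmat n` does. -/
def HasIDColumns (n : ℕ) (X : Fin (2 * n) → Fin (2 * n - 1) → ℕ) : Prop :=
  ∀ (j : Fin (2 * n - 1)) (g : ℕ → ℕ),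
    ∑ i, g (X i j) = g (j.1 + 1) + ∑ k ∈ range (2 * n - 1), g (k + 1)

lemma hasIDColumns_IDmat (n : ℕ) : HasIDColumns n (IDmat n) := by
  intro j g
  have hj := j.2
  simp only [IDmat]
  rw [Fin.sum_univ_eq_sum_range (fun i => g (if i ≤ j.1 then i + 1 else i)),
    ← sum_range_add_sum_Ico _ (show j.1 + 1 ≤ 2 * n by omega),
    ← sum_range_add_sum_Ico _ (show j.1 ≤ 2 * n - 1 by omega), sum_range_succ,
    sum_Ico_add' g, show 2 * n - 1 + 1 = 2 * n by omega]
  have hlow : ∀ i ∈ range j.1, g (if i ≤ j.1 then i + 1 else i) = g (i + 1) :=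
    fun i hi => by rw [if_pos (mem_range.mp hi).le]
  have hhigh : ∀ i ∈ Ico (j.1 + 1) (2 * n), g (if i ≤ j.1 then i + 1 else i) = g i :=
    fun i hi => by rw [if_neg (not_le.mpr (mem_Ico.mp hi).1)]
  rw [sum_congr rfl hlow, sum_congr rfl hhigh, if_pos le_rfl]
  ac_rfl

lemma hasIDColumns_CHmat (n : ℕ) : HasIDColumns n (CHmat n) := by
  intro j g
  have hn : 1 ≤ n := by have := j.2; omega
  simp only [CHmat]
  rw [Fin.sum_univ_eq_sum_range (fun i => g (if i = 0 then j.1 + 1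
      else ((i + 1) + n * (j.1 + 1) - n - 2) % (2 * n - 1) + 1)),
    show range (2 * n) = range (2 * n - 1 + 1) by congr 1; omega, sum_range_succ', if_pos rfl,
    add_comm, ← sum_range_mod_affine (Nat.coprime_one_left _) (n * j.1) (fun k => g (k + 1))]
  refine congrArg _ (sum_congr rfl fun t _ => ?_)
  rw [if_neg t.succ_ne_zero, Nat.mul_succ]
  congr 3
  omega

lemma sum_range_dist_mirror (n : ℕ) :
    ∑ j ∈ range (2 * n - 1), Nat.dist (j + 1) (2 * n - (j + 1)) = 2 * n * (n - 1) := by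
  rcases Nat.eq_zero_or_pos n with rfl | hn
  · simp
  have hhalf := two_mul_sum_range_dist (show n - 1 ≤ 2 * n - 1 by omega)
  have hterm : ∀ j ∈ range (2 * n - 1),
      Nat.dist (j + 1) (2 * n - (j + 1)) = 2 * Nat.dist j (n - 1) :=
    fun j hj => by have := mem_range.mp hj; simp only [Nat.dist]; omega
  rw [sum_congr rfl hterm, ← mul_sum, hhalf, show 2 * n - 1 - (n - 1) = n by omega,
    show n - 1 + 1 = n by omega]
  ring

lemma matDist_MAmat_MDmat (n : ℕ) :
    matDist (MAmat n) (MDmat n) = 2 * n * (2 * n * (n - 1)) := by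
  unfold MDmat
  rw [matDist_const_rows (MAmat n) (fun j => 2 * n - (j.1 + 1))]
  simp only [MAmat, Fin.sum_univ_eq_sum_range (fun j => Nat.dist (j + 1) (2 * n - (j + 1))),
    sum_range_dist_mirror, sum_const, card_univ, Fintype.card_fin, smul_eq_mul]

section HasIDColumns

variable {n : ℕ} {X : Fin (2 * n) → Fin (2 * n - 1) → ℕ}

lemma HasIDColumns.matDist_const_rows (hX : HasIDColumns n X) (r : Fin (2 * n - 1) → ℕ) :
    matDist X (fun _ => r) =
      ∑ j, (Nat.dist (j.1 + 1) (r j) + ∑ k ∈ range (2 * n - 1), Nat.dist (k + 1) (r j)) := by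
  rw [_root_.matDist_const_rows, sum_comm]
  exact sum_congr rfl fun j _ => hX j (fun v => Nat.dist v (r j))

lemma HasIDColumns.matDist_MAmat (hX : HasIDColumns n X) :
    matDist X (MAmat n) = rangeDistSum (2 * n - 1) := by
  unfold MAmat
  rw [hX.matDist_const_rows (fun j => j.1 + 1)]
  simp only [Nat.dist_self, zero_add, Nat.dist_add_add_right]
  rw [Fin.sum_univ_eq_sum_range (fun j => ∑ k ∈ range (2 * n - 1), Nat.dist k j), rangeDistSum,
    sum_comm]

lemma HasIDColumns.matDist_MDmat (hX : HasIDColumns n X) :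
    matDist X (MDmat n) = 2 * n * (n - 1) + rangeDistSum (2 * n - 1) := by
  unfold MDmat
  rw [hX.matDist_const_rows (fun j => 2 * n - (j.1 + 1)), sum_add_distrib,
    Fin.sum_univ_eq_sum_range (fun j => Nat.dist (j + 1) (2 * n - (j + 1))),
    sum_range_dist_mirror,
    Fin.sum_univ_eq_sum_range
      (fun j => ∑ k ∈ range (2 * n - 1), Nat.dist (k + 1) (2 * n - (j + 1))),
    ← sum_range_reflect, rangeDistSum, sum_comm]
  refine congrArg _ (sum_congr rfl fun j _ => sum_congr rfl fun k hk => ?_)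
  have := mem_range.mp hk
  rw [show 2 * n - (2 * n - 1 - 1 - k + 1) = k + 1 by omega, Nat.dist_add_add_right]

end HasIDColumns

lemma abs_matDist_sub_matDist_le {R C : ℕ} (M N M' : Fin R → Fin C → ℕ) :
    |(matDist M M' : ℝ) - matDist N M'| ≤ ∑ i, ∑ j, Nat.dist (M i j) (N i j) := by
  have hMN := matDist_le_sum_dist_add M N M'
  have hNM := matDist_le_sum_dist_add N M M'
  simp only [Nat.dist_comm (N _ _)] at hNM
  rw [abs_sub_le_iff, sub_le_iff_le_add, sub_le_iff_le_add]
  exact ⟨by exact_mod_cast hMN, by exact_mod_cast hNM⟩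

def rowIndexMat (n : ℕ) : Fin (2 * n) → Fin (2 * n - 1) → ℕ := fun i _ => i.1

lemma matDist_rowIndexMat_CHmat_add (n : ℕ) :
    matDist (rowIndexMat n) (CHmat n) + n * (2 * n - 1) =
      rangeDistSum (2 * n) := by
  rw [matDist_eq_of_forall_matchCost_eq
    (d := ∑ i ∈ range (2 * n), ∑ k ∈ range (2 * n - 1), Nat.dist i (k + 1)) fun σ => ?_]
  · rcases Nat.eq_zero_or_pos n with rfl | hn
    · simp [rangeDistSum]
    have hrow : ∀ i, ∑ k ∈ range (2 * n), Nat.dist i k =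
        ∑ k ∈ range (2 * n - 1), Nat.dist i (k + 1) + i := fun i => by
      rw [show 2 * n = 2 * n - 1 + 1 by omega, sum_range_succ', Nat.dist_zero_right]
      rfl
    simp only [rangeDistSum, hrow, sum_add_distrib]
    have hgauss : ∑ i ∈ range (2 * n), i = n * (2 * n - 1) := by
      linarith [sum_range_id_mul_two (2 * n)]
    rw [hgauss]
  · exact (sum_congr rfl fun i _ => sum_CHmat_row (σ i) (Nat.dist i.1)).trans
      (Fin.sum_univ_eq_sum_range (fun i => ∑ k ∈ range (2 * n - 1), Nat.dist i (k + 1)) _)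

lemma sum_dist_IDmat_rowIndexMat_le (n : ℕ) :
    ∑ i, ∑ j, Nat.dist (IDmat n i j) (rowIndexMat n i j) ≤ 2 * n * (2 * n - 1) := by
  have hle : ∀ i j, Nat.dist (IDmat n i j) (rowIndexMat n i j) ≤ 1 := fun i j => by
    simp only [IDmat, rowIndexMat, Nat.dist]; split_ifs <;> omega
  calc _ ≤ ∑ _i : Fin (2 * n), ∑ _j : Fin (2 * n - 1), 1 :=
        sum_le_sum fun i _ => sum_le_sum fun j _ => hle i j
    _ = 2 * n * (2 * n - 1) := by simp

lemma rangeDistSum_cast (m : ℕ) : (rangeDistSum m : ℝ) = ((m : ℝ) ^ 3 - m) / 3 := by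
  have h : ((3 * rangeDistSum m + m : ℕ) : ℝ) = ((m ^ 3 : ℕ) : ℝ) := by
    rw [three_mul_rangeDistSum_add]
  push_cast at h
  linarith

/-- The paper's `D(2n)`. -/
def maxDist (n : ℕ) : ℕ := 4 * (n - 1) * n ^ 2

lemma maxDist_cast (n : ℕ) : (maxDist n : ℝ) = 4 * ((n : ℝ) - 1) * n ^ 2 := by
  rw [maxDist]
  rcases Nat.eq_zero_or_pos n with rfl | hn
  · simp
  · push_cast [Nat.cast_sub hn]; ring

lemma tendsto_div_maxDist_of_isBigO {x : ℕ → ℝ} {a : ℝ}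
    (h : (fun n => x n - a * (n : ℝ) ^ 3) =O[atTop] (fun n => (n : ℝ) ^ 2)) :
    Tendsto (fun n => x n / maxDist n) atTop (𝓝 (a / 4)) := by
  have hsmall : Tendsto (fun n : ℕ => (x n - a * (n : ℝ) ^ 3) / (n : ℝ) ^ 3) atTop (𝓝 0) :=
    (h.trans_isLittleO ((isLittleO_pow_pow_atTop_of_lt (𝕜 := ℝ) (by norm_num : 2 < 3))
      |>.comp_tendsto tendsto_natCast_atTop_atTop)).tendsto_div_nhds_zero
  have hinv : Tendsto (fun n : ℕ => (n : ℝ)⁻¹) atTop (𝓝 0) :=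
    tendsto_inv_atTop_zero.comp tendsto_natCast_atTop_atTop
  have hlim := (tendsto_const_nhds (x := a)).add hsmall |>.div
    ((tendsto_const_nhds (x := (4 : ℝ))).sub (hinv.const_mul 4)) (by norm_num)
  rw [add_zero, mul_zero, sub_zero] at hlim
  refine hlim.congr' ?_
  filter_upwards [eventually_ge_atTop 2] with n hn
  have hn0 : (n : ℝ) ≠ 0 := by positivity
  have hn1 : (n : ℝ) - 1 ≠ 0 := sub_ne_zero.mpr (by norm_cast; omega)
  simp only [Pi.div_apply, maxDist_cast]
  field_simp
  ring

lemma isBigO_sub_cube_of_eq {x : ℕ → ℝ} (a b c : ℝ)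
    (h : ∀ n, 1 ≤ n → x n = a * (n : ℝ) ^ 3 + b * (n : ℝ) ^ 2 + c * n) :
    (fun n => x n - a * (n : ℝ) ^ 3) =O[atTop] (fun n => (n : ℝ) ^ 2) := by
  have hlin : (fun n : ℕ => (n : ℝ)) =O[atTop] (fun n => (n : ℝ) ^ 2) :=
    IsBigO.of_bound 1 (Eventually.of_forall fun n => by
      simp only [Real.norm_natCast, norm_pow, one_mul]
      exact_mod_cast Nat.le_self_pow two_ne_zero n)
  refine ((isBigO_const_mul_self b _ _).add ((isBigO_const_mul_self c _ _).trans hlin)).congr' ?_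
    EventuallyEq.rfl
  filter_upwards [eventually_ge_atTop 1] with n hn
  rw [h n hn]
  ring

lemma rangeDistSum_two_mul_sub_one_cast {n : ℕ} (hn : 1 ≤ n) :
    (rangeDistSum (2 * n - 1) : ℝ) = 8 / 3 * (n : ℝ) ^ 3 - 4 * (n : ℝ) ^ 2 + 4 / 3 * n := by
  rw [rangeDistSum_cast, Nat.cast_sub (by omega)]
  push_cast
  ring

lemma isBigO_matDist_IDmat_CHmat :
    (fun n => (matDist (IDmat n) (CHmat n) : ℝ) - 8 / 3 * (n : ℝ) ^ 3) =O[atTop]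
      (fun n => (n : ℝ) ^ 2) := by
  set A : ℕ → ℝ := fun n => matDist (rowIndexMat n) (CHmat n)
  have hA : (fun n => A n - 8 / 3 * (n : ℝ) ^ 3) =O[atTop] (fun n => (n : ℝ) ^ 2) :=
    isBigO_sub_cube_of_eq (8 / 3) (-2) (1 / 3) fun n hn => by
      have h : ((_ + n * (2 * n - 1) : ℕ) : ℝ) = rangeDistSum (2 * n) :=
        congrArg Nat.cast (matDist_rowIndexMat_CHmat_add n)
      push_cast [Nat.cast_sub (show 1 ≤ 2 * n by omega), rangeDistSum_cast] at h
      linear_combination h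
  have hdiff : (fun n => (matDist (IDmat n) (CHmat n) : ℝ) - A n) =O[atTop]
      (fun n => (n : ℝ) ^ 2) := by
    refine IsBigO.of_bound 4 (Eventually.of_forall fun n => ?_)
    have hsum := (sum_dist_IDmat_rowIndexMat_le n).trans
      (Nat.mul_le_mul_left (2 * n) (Nat.sub_le (2 * n) 1))
    rw [Real.norm_eq_abs, norm_pow, Real.norm_natCast]
    calc _ ≤ ((2 * n * (2 * n) : ℕ) : ℝ) :=
          (abs_matDist_sub_matDist_le _ _ _).trans (by exact_mod_cast hsum)
      _ = 4 * (n : ℝ) ^ 2 := by push_cast; ring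
  exact (hdiff.add hA).congr_left fun n => by ring

open Filter in
/-- Asymptotic normalized mutual attraction distances: with
`D(2n) = 4(n-1)n²` the maximum possible distance, the normalized distance of
`MA^{2n}` and `MD^{2n}` tends to `1`, while each other pair among
`{ID, MA, MD, CH}` has normalized distance tending to `2/3`. -/
theorem normalized_distances_extreme_matrices :
    Tendsto (fun n : ℕ =>
      (matDist (MAmat n) (MDmat n) : ℝ) / ((4 * (n - 1) * n ^ 2 : ℕ) : ℝ))
      atTop (nhds 1) ∧
    Tendsto (fun n : ℕ =>
      (matDist (IDmat n) (MAmat n) : ℝ) / ((4 * (n - 1) * n ^ 2 : ℕ) : ℝ))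
      atTop (nhds (2 / 3)) ∧
    Tendsto (fun n : ℕ =>
      (matDist (IDmat n) (MDmat n) : ℝ) / ((4 * (n - 1) * n ^ 2 : ℕ) : ℝ))
      atTop (nhds (2 / 3)) ∧
    Tendsto (fun n : ℕ =>
      (matDist (IDmat n) (CHmat n) : ℝ) / ((4 * (n - 1) * n ^ 2 : ℕ) : ℝ))
      atTop (nhds (2 / 3)) ∧
    Tendsto (fun n : ℕ =>
      (matDist (MAmat n) (CHmat n) : ℝ) / ((4 * (n - 1) * n ^ 2 : ℕ) : ℝ))
      atTop (nhds (2 / 3)) ∧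
    Tendsto (fun n : ℕ =>
      (matDist (MDmat n) (CHmat n) : ℝ) / ((4 * (n - 1) * n ^ 2 : ℕ) : ℝ))
      atTop (nhds (2 / 3)) := by
  rw [show (1 : ℝ) = 4 / 4 by norm_num, show (2 / 3 : ℝ) = 8 / 3 / 4 by norm_num]
  refine ⟨tendsto_div_maxDist_of_isBigO ?_, tendsto_div_maxDist_of_isBigO ?_,
    tendsto_div_maxDist_of_isBigO ?_, tendsto_div_maxDist_of_isBigO isBigO_matDist_IDmat_CHmat,
    tendsto_div_maxDist_of_isBigO ?_, tendsto_div_maxDist_of_isBigO ?_⟩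
  · refine isBigO_sub_cube_of_eq _ (-4) 0 fun n hn => ?_
    rw [matDist_MAmat_MDmat]
    push_cast [Nat.cast_sub hn]
    ring
  · refine isBigO_sub_cube_of_eq _ (-4) (4 / 3) fun n hn => ?_
    rw [(hasIDColumns_IDmat n).matDist_MAmat, rangeDistSum_two_mul_sub_one_cast hn]
    ring
  · refine isBigO_sub_cube_of_eq _ (-2) (-2 / 3) fun n hn => ?_
    rw [(hasIDColumns_IDmat n).matDist_MDmat]
    push_cast [Nat.cast_sub hn, rangeDistSum_two_mul_sub_one_cast hn]
    ring
  · refine isBigO_sub_cube_of_eq _ (-4) (4 / 3) fun n hn => ?_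
    rw [matDist_comm, (hasIDColumns_CHmat n).matDist_MAmat, rangeDistSum_two_mul_sub_one_cast hn]
    ring
  · refine isBigO_sub_cube_of_eq _ (-2) (-2 / 3) fun n hn => ?_
    rw [matDist_comm, (hasIDColumns_CHmat n).matDist_MDmat]
    push_cast [Nat.cast_sub hn, rangeDistSum_two_mul_sub_one_cast hn]
    ring
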